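/- In the Flock migration protocol with threshold η < 1, every executed migration strictly decreases the potential, hence no outcome can be revisited and the protocol converges to a Nash-like stable outcome (where no player satisfies the migration condition) in finitely many rounds. -/

import Mathlib

open Finset

/-- Load on resource `x` in outcome `σ`. -/
def load {V A : Type*} [Fintype V] [DecidableEq A]
    (u : V → A → ℝ) (σ : V → A) (x : A) : ℝ :=
  ∑ i, if σ i = x then u i (σ i) else 0

/-- Flock migration condition: player `i` at `σ i` may migrate to `y` when
`u_i(y) · f(w_y + u_i(y)) ≤ η · u_i(x) · f(w_x − u_i(x))`. -/
def flockStep {V A : Type*} [Fintype V] [DecidableEq A]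
    (u : V → A → ℝ) (f : ℝ → ℝ) (η : ℝ) (σ : V → A) (i : V) (y : A) : Prop :=
  u i y * f (load u σ y + u i y) ≤
    η * (u i (σ i) * f (load u σ (σ i) - u i (σ i)))


/-! The proof uses the Rosenthal-type potential `Φ σ = ∑ₓ ∫₀^{w_x} f`. When player `i` moves
from `x` to `y`, monotonicity of `f` bounds the growth of the integral at `y` by
`u_i(y) · f(w_y + u_i(y))` and the drop of the integral at `x` from below by
`u_i(x) · f(w_x - u_i(x))`; the migration condition with `η < 1` therefore makes `Φ` drop strictly.
A strictly decreasing potential along an infinite run would take infinitely many values on the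
finite set of outcomes. -/

section Load

variable {V A : Type*} [Fintype V] [DecidableEq A] {u : V → A → ℝ}

lemma load_nonneg (hu : ∀ i x, 0 ≤ u i x) (σ : V → A) (x : A) : 0 ≤ load u σ x :=
  Finset.sum_nonneg fun j _ => by split_ifs <;> simp [hu]

lemma apply_le_load (hu : ∀ i x, 0 ≤ u i x) (σ : V → A) (i : V) :
    u i (σ i) ≤ load u σ (σ i) := by
  have h := Finset.single_le_sum (f := fun j => if σ j = σ i then u j (σ j) else 0)
    (fun j _ => by split_ifs <;> simp [hu]) (mem_univ i)
  simpa [load] using h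

variable [DecidableEq V]

lemma load_update (σ : V → A) (i : V) (y z : A) :
    load u (Function.update σ i y) z
      = load u σ z - (if σ i = z then u i (σ i) else 0) + (if y = z then u i y else 0) := by
  have hterm : (fun j => if Function.update σ i y j = z then u j (Function.update σ i y j) else 0)
      = Function.update (fun j => if σ j = z then u j (σ j) else 0) i
          (if y = z then u i y else 0) := by
    funext j
    rcases eq_or_ne j i with rfl | hj
    · simp
    · simp [Function.update_of_ne hj]
  rw [load, hterm, sum_update_of_mem (mem_univ i), sdiff_singleton_eq_erase,
    sum_erase_eq_sub (mem_univ i), load]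
  ring

variable {σ : V → A} {i : V} {y : A}

lemma load_update_target (hy : y ≠ σ i) :
    load u (Function.update σ i y) y = load u σ y + u i y := by
  rw [load_update, if_neg hy.symm, if_pos rfl]
  ring

lemma load_update_source (hy : y ≠ σ i) :
    load u (Function.update σ i y) (σ i) = load u σ (σ i) - u i (σ i) := by
  rw [load_update, if_pos rfl, if_neg hy]
  ring

lemma load_update_of_ne {z : A} (hzy : z ≠ y) (hz : z ≠ σ i) :
    load u (Function.update σ i y) z = load u σ z := by
  rw [load_update, if_neg (Ne.symm hz), if_neg (Ne.symm hzy)]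
  ring

lemma sum_comp_load_update [Fintype A] (G : ℝ → ℝ) (hy : y ≠ σ i) :
    ∑ z, G (load u (Function.update σ i y) z)
      = ∑ z, G (load u σ z) + (G (load u σ y + u i y) - G (load u σ y))
          - (G (load u σ (σ i)) - G (load u σ (σ i) - u i (σ i))) := by
  have hdiff : ∑ z, (G (load u (Function.update σ i y) z) - G (load u σ z))
      = (G (load u σ y + u i y) - G (load u σ y))
          + (G (load u σ (σ i) - u i (σ i)) - G (load u σ (σ i))) := by
    rw [Fintype.sum_eq_add y (σ i) hy fun z hz => by rw [load_update_of_ne hz.1 hz.2, sub_self],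
      load_update_target hy, load_update_source hy]
  rw [sum_sub_distrib] at hdiff
  linarith

end Load

section MonotoneIntegral

variable {f : ℝ → ℝ} {c d : ℝ}

lemma MonotoneOn.intervalIntegrable_of_nonneg (hf : MonotoneOn f (Set.Ici 0))
    (hc : 0 ≤ c) (hd : 0 ≤ d) : IntervalIntegrable f MeasureTheory.volume c d :=
  (hf.mono fun _ ht => le_trans (le_min hc hd) ht.1).intervalIntegrable

lemma MonotoneOn.integral_sub_integral_le (hf : MonotoneOn f (Set.Ici 0))
    (hc : 0 ≤ c) (hcd : c ≤ d) :
    (∫ t in (0 : ℝ)..d, f t) - ∫ t in (0 : ℝ)..c, f t ≤ (d - c) * f d := by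
  have hd := hc.trans hcd
  rw [intervalIntegral.integral_interval_sub_left (hf.intervalIntegrable_of_nonneg le_rfl hd)
    (hf.intervalIntegrable_of_nonneg le_rfl hc)]
  simpa using intervalIntegral.integral_mono_on hcd (hf.intervalIntegrable_of_nonneg hc hd)
    intervalIntegrable_const fun t ht => hf (hc.trans ht.1) hd ht.2

lemma MonotoneOn.mul_le_integral_sub_integral (hf : MonotoneOn f (Set.Ici 0))
    (hc : 0 ≤ c) (hcd : c ≤ d) :
    (d - c) * f c ≤ (∫ t in (0 : ℝ)..d, f t) - ∫ t in (0 : ℝ)..c, f t := by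
  have hd := hc.trans hcd
  rw [intervalIntegral.integral_interval_sub_left (hf.intervalIntegrable_of_nonneg le_rfl hd)
    (hf.intervalIntegrable_of_nonneg le_rfl hc)]
  simpa using intervalIntegral.integral_mono_on hcd intervalIntegrable_const
    (hf.intervalIntegrable_of_nonneg hc hd) fun t ht => hf hc (hc.trans ht.1) ht.1

end MonotoneIntegral

noncomputable def flockPotential {V A : Type*} [Fintype V] [Fintype A] [DecidableEq A]
    (u : V → A → ℝ) (f : ℝ → ℝ) (σ : V → A) : ℝ :=
  ∑ x, ∫ t in (0 : ℝ)..load u σ x, f t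

theorem flockPotential_update_lt {V A : Type*} [Fintype V] [Fintype A] [DecidableEq V]
    [DecidableEq A] {u : V → A → ℝ} {f : ℝ → ℝ} {η : ℝ} {σ : V → A} {i : V} {y : A}
    (hu : ∀ i x, 0 < u i x) (hf : MonotoneOn f (Set.Ici 0)) (hf_pos : ∀ w, 0 ≤ w → 0 < f w)
    (hη : η < 1) (hy : y ≠ σ i) (hstep : flockStep u f η σ i y) :
    flockPotential u f (Function.update σ i y) < flockPotential u f σ := by
  have hu' : ∀ i x, 0 ≤ u i x := fun i x => (hu i x).le
  have hWy := load_nonneg hu' σ y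
  have hWx : 0 ≤ load u σ (σ i) - u i (σ i) := sub_nonneg.2 (apply_le_load hu' σ i)
  have hgain := hf.integral_sub_integral_le hWy (le_add_of_nonneg_right (hu' i y))
  have hloss := hf.mul_le_integral_sub_integral hWx (sub_le_self _ (hu' i (σ i)))
  have hcost : 0 < u i (σ i) * f (load u σ (σ i) - u i (σ i)) := mul_pos (hu i _) (hf_pos _ hWx)
  rw [flockStep] at hstep
  rw [flockPotential, flockPotential, sum_comp_load_update (fun w => ∫ t in (0 : ℝ)..w, f t) hy]
  simp only [add_sub_cancel_left, sub_sub_cancel] at hgain hloss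
  linarith [mul_pos (sub_pos.2 hη) hcost]

theorem stmt_4 {V A : Type*} [Fintype V] [Fintype A] [DecidableEq V] [DecidableEq A]
    (u : V → A → ℝ) (hu : ∀ i x, 0 < u i x)
    (f : ℝ → ℝ)
    (hf_mono : ∀ w₁ w₂ : ℝ, 0 ≤ w₁ → w₁ ≤ w₂ → f w₁ ≤ f w₂)
    (hf_pos : ∀ w : ℝ, 0 ≤ w → 0 < f w)
    (η : ℝ) (hη : η < 1)
    (seq : ℕ → (V → A))
    (hstep : ∀ n : ℕ, ∃ (i : V) (y : A), y ≠ seq n i ∧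
        flockStep u f η (seq n) i y ∧
        seq (n + 1) = Function.update (seq n) i y) :
    False := by
  have hf : MonotoneOn f (Set.Ici 0) := fun a ha b _ hab => hf_mono a b ha hab
  have hanti : StrictAnti fun n => flockPotential u f (seq n) := by
    refine strictAnti_nat_of_succ_lt fun n => ?_
    obtain ⟨i, y, hy, hmigrate, hnext⟩ := hstep n
    rw [hnext]
    exact flockPotential_update_lt hu hf hf_pos hη hy hmigrate
  obtain ⟨m, k, hmk, hrepeat⟩ := Finite.exists_ne_map_eq_of_infinite seq
  exact hmk (hanti.injective (congrArg (flockPotential u f) hrepeat))
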